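/- Let L be a finite lattice, let T be a trinket-removal set of L, and let R be the induced lattice on L \ T. Then L is a modular lattice if and only if R is a modular lattice. -/

import Mathlib

/-- An element of a finite lattice is *doubly irreducible* if it has exactly one
upper cover and exactly one lower cover. -/
def DoublyIrreducible {α : Type*} [Lattice α] (x : α) : Prop :=
  (∃! u, x ⋖ u) ∧ (∃! l, l ⋖ x)

/-- A *decoration site* of a lattice is a pair `(a, b)` such that the set of upper
covers of `a` equals the set of lower covers of `b`, and `a` has at least two
upper covers. -/
def DecorationSite {α : Type*} [Lattice α] (a b : α) : Prop :=
  {x | a ⋖ x} = {x | x ⋖ b} ∧ 2 ≤ {x | a ⋖ x}.ncard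

/-- The doubly irreducible elements strictly between `a` and `b`. -/
def siteTrinkets {α : Type*} [Lattice α] (a b : α) : Set α :=
  {x | DoublyIrreducible x ∧ a < x ∧ x < b}

/-- A *trinket-removal set* of a lattice: for every decoration site `(a, b)` it
contains exactly `min d (k - 2)` doubly irreducible elements strictly between
`a` and `b` (where `d` is the number of doubly irreducible elements strictly
between `a` and `b`, and `k` is the number of upper covers of `a`), and it
contains no other elements. -/
def TrinketRemovalSet {α : Type*} [Lattice α] (T : Set α) : Prop :=
  (∀ a b : α, DecorationSite a b →
      (T ∩ siteTrinkets a b).ncard =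
        min (siteTrinkets a b).ncard ({x | a ⋖ x}.ncard - 2)) ∧
  ∀ t ∈ T, ∃ a b : α, DecorationSite a b ∧ t ∈ siteTrinkets a b

/-- A finite lattice is a *rack* if `min d (k - 2) = 0` for every decoration site. -/
def IsRack (α : Type*) [Lattice α] : Prop :=
  ∀ a b : α, DecorationSite a b →
    min (siteTrinkets a b).ncard ({x | a ⋖ x}.ncard - 2) = 0

/-- A *knot* of a finite lattice is an element distinct from top and bottom that
is comparable with every element. -/
def IsKnot {α : Type*} [Lattice α] (x : α) : Prop :=
  (∃ y, x < y) ∧ (∃ y, y < x) ∧ ∀ y, x ≤ y ∨ y ≤ x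

/-- Birkhoff's semimodularity condition: whenever distinct `x` and `y` both
cover a common element `a`, the join `x ⊔ y` covers both `x` and `y`. -/
def Semimodular (α : Type*) [Lattice α] : Prop :=
  ∀ a x y : α, x ≠ y → a ⋖ x → a ⋖ y → x ⋖ x ⊔ y ∧ y ⋖ x ⊔ y

/-- The modular law: for all `x ≤ z`, `x ⊔ (y ⊓ z) = (x ⊔ y) ⊓ z`. -/
def ModularLaw (α : Type*) [Lattice α] : Prop :=
  ∀ x y z : α, x ≤ z → x ⊔ (y ⊓ z) = (x ⊔ y) ⊓ z

/-!
Put the trinkets of `T` back into `R` one at a time; since they are sup- and inf-irreducible, every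
intermediate set is again a sublattice. A trinket `t` of a decoration site `(a, b)` is doubly
irreducible, so it meets and joins every element `w` it is incomparable with through `a` and `b`:
`w ⊓ t = w ⊓ a` and `w ⊔ t = w ⊔ b`. Hence a pentagon through `t` in the enlarged lattice yields a
pentagon-like configuration through `a` and `b` in the smaller one, and since the elements strictly
between `a` and `b` are atoms of `[a, b]`, modularity of the smaller lattice rules it out.
-/

section

variable {α : Type*} [Lattice α]

def ModularOn (s : Set α) : Prop :=
  ∀ ⦃x⦄, x ∈ s → ∀ ⦃y⦄, y ∈ s → ∀ ⦃z⦄, z ∈ s → x ≤ z → x ⊔ (y ⊓ z) = (x ⊔ y) ⊓ z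

theorem modularOn_univ_iff : ModularOn (Set.univ : Set α) ↔ ModularLaw α :=
  ⟨fun h _ _ _ hxz => h trivial trivial trivial hxz, fun h x _ y _ z _ hxz => h x y z hxz⟩

theorem Sublattice.modularOn_coe_iff (S : Sublattice α) : ModularOn (S : Set α) ↔ ModularLaw S :=
  ⟨fun h x y z hxz => Subtype.ext (h x.2 y.2 z.2 hxz),
    fun h x hx y hy z hz hxz => congrArg Subtype.val (h ⟨x, hx⟩ ⟨y, hy⟩ ⟨z, hz⟩ hxz)⟩

theorem ModularOn.mono {s t : Set α} (h : ModularOn t) (hst : s ⊆ t) : ModularOn s :=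
  fun _ hx _ hy _ hz hxz => h (hst hx) (hst hy) (hst hz) hxz

theorem ModularOn.eq_of_le_of_inf_eq_of_sup_eq {s : Set α} {x y z : α} (h : ModularOn s)
    (hx : x ∈ s) (hy : y ∈ s) (hz : z ∈ s) (hxz : x ≤ z) (hinf : x ⊓ y = z ⊓ y)
    (hsup : x ⊔ y = z ⊔ y) : x = z :=
  Eq.symm <| calc
    z = (x ⊔ y) ⊓ z := by rw [hsup, inf_eq_right.2 le_sup_left]
    _ = x ⊔ y ⊓ z := (h hx hy hz hxz).symm
    _ = x := by rw [inf_comm, ← hinf, sup_inf_self]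

/-- The pentagon (`N₅`) criterion. -/
theorem modularOn_of_forall_eq_of_inf_eq_of_sup_eq {s : Set α} (hsup : SupClosed s)
    (hinf : InfClosed s)
    (h : ∀ ⦃x⦄, x ∈ s → ∀ ⦃y⦄, y ∈ s → ∀ ⦃z⦄, z ∈ s → x ≤ z →
      x ⊓ y = z ⊓ y → x ⊔ y = z ⊔ y → x = z) :
    ModularOn s := by
  intro x hx y hy z hz hxz
  have hle : x ⊔ y ⊓ z ≤ (x ⊔ y) ⊓ z :=
    sup_le (le_inf le_sup_left hxz) (inf_le_inf_right z le_sup_right)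
  refine h (hsup hx (hinf hy hz)) hy (hinf (hsup hx hy) hz) hle ?_ ?_
  · exact le_antisymm (inf_le_inf_right y hle)
      (le_inf ((le_inf inf_le_right (inf_le_left.trans inf_le_right)).trans le_sup_right)
        inf_le_right)
  · exact le_antisymm (sup_le_sup_right hle y)
      (sup_le (inf_le_left.trans (sup_le (le_sup_left.trans le_sup_left) le_sup_right))
        le_sup_right)

theorem eq_of_inf_eq_of_sup_eq_of_le_or_le {x y z : α}
    (hinf : x ⊓ y = z ⊓ y) (hsup : x ⊔ y = z ⊔ y) (h : x ≤ y ∨ y ≤ z) : x = z := by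
  rcases h with hxy | hyz
  · have hzy : z ≤ y := le_sup_left.trans (hsup ▸ sup_eq_right.2 hxy).le
    rw [← inf_eq_left.2 hxy, hinf, inf_eq_left.2 hzy]
  · have hyx : y ≤ x := (inf_eq_right.2 hyz ▸ hinf ▸ inf_le_left :)
    rw [← sup_eq_left.2 hyx, hsup, sup_eq_left.2 hyz]

theorem supClosed_of_forall_notMem_supIrred {s : Set α} (h : ∀ x ∉ s, SupIrred x) :
    SupClosed s := by
  intro x hx y hy
  by_contra hxy
  rcases (h _ hxy).2 rfl with hx' | hy'
  exacts [hxy (hx' ▸ hx), hxy (hy' ▸ hy)]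

theorem infClosed_of_forall_notMem_infIrred {s : Set α} (h : ∀ x ∉ s, InfIrred x) :
    InfClosed s := by
  intro x hx y hy
  by_contra hxy
  rcases (h _ hxy).2 rfl with hx' | hy'
  exacts [hxy (hx' ▸ hx), hxy (hy' ▸ hy)]

theorem DecorationSite.covBy_iff {a b : α} (h : DecorationSite a b) (c : α) : a ⋖ c ↔ c ⋖ b :=
  Set.ext_iff.mp h.1 c

theorem TrinketRemovalSet.doublyIrreducible {T : Set α} (hT : TrinketRemovalSet T) {t : α}
    (ht : t ∈ T) : DoublyIrreducible t := by
  obtain ⟨_, _, -, hdi, -⟩ := hT.2 t ht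
  exact hdi

section Finite

variable [Finite α]

theorem covBy_and_covBy_of_covBy_iff {a b w : α} (hab : ∀ c, a ⋖ c ↔ c ⋖ b) (haw : a < w)
    (hwb : w < b) : a ⋖ w ∧ w ⋖ b := by
  obtain ⟨c, hac, hcw⟩ := exists_covBy_le_of_lt haw
  have hcb : c ⋖ b := (hab c).1 hac
  obtain rfl : c = w := hcw.eq_of_not_lt fun h => hcb.2 h hwb
  exact ⟨hac, hcb⟩

theorem lt_sup_inf_of_not_le {a b y : α} (hcov : ∀ c, a ⋖ c → c ≤ b) (hya : ¬ y ≤ a) :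
    a < (a ⊔ y) ⊓ b := by
  obtain ⟨c, hac, hcy⟩ :=
    exists_covBy_le_of_lt (le_sup_left.lt_of_ne fun h => hya (le_sup_right.trans h.ge))
  exact hac.lt.trans_le (le_inf hcy (hcov c hac))

theorem sup_inf_lt_of_not_le {a b y : α} (hcov : ∀ c, c ⋖ b → a ≤ c) (hby : ¬ b ≤ y) :
    a ⊔ y ⊓ b < b := by
  obtain ⟨c, hyc, hcb⟩ :=
    exists_le_covBy_of_lt (inf_le_right.lt_of_ne fun h => hby (h.ge.trans inf_le_left))
  exact (sup_le (hcov c hcb) hyc).trans_lt hcb.lt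

namespace DoublyIrreducible

theorem le_of_lt {t a w : α} (ht : DoublyIrreducible t) (ha : a ⋖ t) (hw : w < t) : w ≤ a := by
  obtain ⟨c, hwc, hct⟩ := exists_le_covBy_of_lt hw
  exact ht.2.unique hct ha ▸ hwc

theorem le_of_gt {t b w : α} (ht : DoublyIrreducible t) (hb : t ⋖ b) (hw : t < w) : b ≤ w := by
  obtain ⟨c, htc, hcw⟩ := exists_covBy_le_of_lt hw
  exact ht.1.unique htc hb ▸ hcw

theorem supIrred {t : α} (ht : DoublyIrreducible t) : SupIrred t := by
  obtain ⟨a, ha, -⟩ := ht.2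
  refine ⟨not_isMin_of_lt ha.lt, fun x y hxy => ?_⟩
  by_contra! h
  have hx := ht.le_of_lt ha ((hxy ▸ le_sup_left).lt_of_ne h.1)
  have hy := ht.le_of_lt ha ((hxy ▸ le_sup_right).lt_of_ne h.2)
  exact ha.lt.not_ge (hxy ▸ sup_le hx hy)

theorem infIrred {t : α} (ht : DoublyIrreducible t) : InfIrred t := by
  obtain ⟨b, hb, -⟩ := ht.1
  refine ⟨not_isMax_of_lt hb.lt, fun x y hxy => ?_⟩
  by_contra! h
  have hx := ht.le_of_gt hb ((hxy ▸ inf_le_left).lt_of_ne' h.1)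
  have hy := ht.le_of_gt hb ((hxy ▸ inf_le_right).lt_of_ne' h.2)
  exact hb.lt.not_ge (hxy ▸ le_inf hx hy)

theorem inf_eq_inf_of_not_le {t a w : α} (ht : DoublyIrreducible t) (ha : a ⋖ t)
    (hw : ¬ t ≤ w) : w ⊓ t = w ⊓ a :=
  le_antisymm
    (le_inf inf_le_left (ht.le_of_lt ha (inf_le_right.lt_of_ne fun h => hw (h ▸ inf_le_left))))
    (inf_le_inf_left w ha.le)

theorem sup_eq_sup_of_not_le {t b w : α} (ht : DoublyIrreducible t) (hb : t ⋖ b)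
    (hw : ¬ w ≤ t) : w ⊔ t = w ⊔ b :=
  le_antisymm (sup_le_sup_left hb.le w)
    (sup_le le_sup_left (ht.le_of_gt hb (le_sup_right.lt_of_ne' fun h => hw (h ▸ le_sup_left))))

end DoublyIrreducible

/-- `a ⊔ x ⊓ b ≤ a ⊔ z ⊓ b` both lie strictly inside `[a, b]`, whose inner elements are pairwise
incomparable; so they are equal, and this gives `b ⊓ z ≤ x`. -/
theorem ModularOn.eq_of_inf_eq_of_sup_eq_of_covBy_iff {W : Set α} {a b x z : α}
    (hW : ModularOn W) (haW : a ∈ W) (hbW : b ∈ W) (hle : a ≤ b) (hab : ∀ c, a ⋖ c ↔ c ⋖ b)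
    (hx : x ∈ W) (hz : z ∈ W) (hxz : x ≤ z) (hinf : x ⊓ a = z ⊓ a) (hsup : x ⊔ b = z ⊔ b)
    (hxa : ¬ x ≤ a) (hbz : ¬ b ≤ z) : x = z := by
  have hp : a < a ⊔ x ⊓ b :=
    hW haW hx hbW hle ▸ lt_sup_inf_of_not_le (fun c hc => ((hab c).1 hc).le) hxa
  have hq : a ⊔ z ⊓ b < b := sup_inf_lt_of_not_le (fun c hc => ((hab c).2 hc).le) hbz
  have hpq : a ⊔ x ⊓ b ≤ a ⊔ z ⊓ b := sup_le_sup_left (inf_le_inf_right b hxz) a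
  have hqp : a ⊔ z ⊓ b = a ⊔ x ⊓ b :=
    (hpq.eq_or_lt.resolve_right
      ((covBy_and_covBy_of_covBy_iff hab (hp.trans_le hpq) hq).1.2 hp)).symm
  have hzb : b ⊓ z ≤ x ⊔ a := calc
    b ⊓ z = z ⊓ b := inf_comm b z
    _ ≤ a ⊔ z ⊓ b := le_sup_right
    _ = a ⊔ x ⊓ b := hqp
    _ ≤ x ⊔ a := sup_comm a x ▸ sup_le_sup_left inf_le_left a
  have hbzx : b ⊓ z ≤ x := calc
    b ⊓ z ≤ (x ⊔ a) ⊓ z := le_inf hzb inf_le_right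
    _ = x ⊔ a ⊓ z := (hW hx haW hz hxz).symm
    _ = x := by rw [inf_comm, ← hinf, sup_inf_self]
  refine le_antisymm hxz ?_
  calc z = (x ⊔ b) ⊓ z := by rw [hsup, inf_eq_right.2 le_sup_left]
    _ = x ⊔ b ⊓ z := (hW hx hbW hz hxz).symm
    _ ≤ x := sup_le le_rfl hbzx

theorem ModularOn.insert {W : Set α} {a b t : α} (hW : ModularOn W)
    (hsup : SupClosed (insert t W)) (hinf : InfClosed (insert t W)) (haW : a ∈ W) (hbW : b ∈ W)
    (hab : ∀ c, a ⋖ c ↔ c ⋖ b) (ht : DoublyIrreducible t) (hat : a < t) (htb : t < b) :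
    ModularOn (insert t W) := by
  obtain ⟨hat', htb'⟩ := covBy_and_covBy_of_covBy_iff hab hat htb
  have hle : a ≤ b := hat.le.trans htb.le
  refine modularOn_of_forall_eq_of_inf_eq_of_sup_eq hsup hinf
    fun x hx y hy z hz hxz hmeet hjoin => ?_
  by_cases hc : x ≤ y ∨ y ≤ z
  · exact eq_of_inf_eq_of_sup_eq_of_le_or_le hmeet hjoin hc
  obtain ⟨hxy, hyz⟩ := not_or.mp hc
  rcases hx with hx | hx <;> rcases hy with hy | hy <;> rcases hz with hz | hz
  · exact absurd (hx.trans hy.symm).le hxy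
  · exact absurd (hx.trans hy.symm).le hxy
  · exact hx.trans hz.symm
  · subst x
    rcases hxz.eq_or_lt with rfl | htz
    · rfl
    have hya : ¬ y ≤ a := fun h => hyz (h.trans (hat.le.trans hxz))
    have hyb : y ⊓ b ≤ a := calc
      y ⊓ b ≤ z ⊓ y := inf_comm b y ▸ inf_le_inf_right y (ht.le_of_gt htb' htz)
      _ = y ⊓ a := by rw [← hmeet, inf_comm, ht.inf_eq_inf_of_not_le hat' hxy]
      _ ≤ a := inf_le_right
    exact ((lt_sup_inf_of_not_le (fun c hc => ((hab c).1 hc).le) hya).not_ge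
      (hW haW hy hbW hle ▸ sup_le le_rfl hyb)).elim
  · exact absurd (hy.trans hz.symm).le hyz
  · subst y
    exact ModularOn.eq_of_inf_eq_of_sup_eq_of_covBy_iff hW haW hbW hle hab hx hz hxz
      (by rw [← ht.inf_eq_inf_of_not_le hat' fun h => hyz (h.trans hxz),
        ← ht.inf_eq_inf_of_not_le hat' hyz, hmeet])
      (by rw [← ht.sup_eq_sup_of_not_le htb' hxy,
        ← ht.sup_eq_sup_of_not_le htb' fun h => hxy (hxz.trans h), hjoin])
      (fun h => hxy (h.trans hat.le)) (fun h => hyz (htb.le.trans h))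
  · subst z
    rcases hxz.eq_or_lt with rfl | hxt
    · rfl
    have hby : ¬ b ≤ y := fun h => hxy (hxt.le.trans (htb.le.trans h))
    have hbay : b ≤ a ⊔ y := calc
      b ≤ y ⊔ t :=
        ht.le_of_gt htb' (le_sup_right.lt_of_ne' fun h => hyz (le_sup_left.trans h.le))
      _ = x ⊔ y := by rw [sup_comm, hjoin]
      _ ≤ a ⊔ y := sup_le_sup_right (ht.le_of_lt hat' hxt) y
    exact ((sup_inf_lt_of_not_le (fun c hc => ((hab c).2 hc).le) hby).ne
      (by rw [hW haW hy hbW hle, inf_eq_right.2 hbay])).elim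
  · exact hW.eq_of_le_of_inf_eq_of_sup_eq hx hy hz hxz hmeet hjoin

theorem DecorationSite.exists_covBy_ne {a b : α} (h : DecorationSite a b) :
    ∃ c₁ c₂, a ⋖ c₁ ∧ a ⋖ c₂ ∧ c₁ ≠ c₂ :=
  (Set.one_lt_ncard_iff (Set.toFinite _)).mp (one_lt_two.trans_le h.2)

theorem DecorationSite.not_doublyIrreducible_left {a b : α} (h : DecorationSite a b) :
    ¬ DoublyIrreducible a := fun ha => by
  obtain ⟨c₁, c₂, h₁, h₂, hne⟩ := h.exists_covBy_ne
  exact hne (ha.1.unique h₁ h₂)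

theorem DecorationSite.not_doublyIrreducible_right {a b : α} (h : DecorationSite a b) :
    ¬ DoublyIrreducible b := fun hb => by
  obtain ⟨c₁, c₂, h₁, h₂, hne⟩ := h.exists_covBy_ne
  exact hne (hb.2.unique ((h.covBy_iff c₁).1 h₁) ((h.covBy_iff c₂).1 h₂))

namespace TrinketRemovalSet

variable {T : Set α}

theorem supClosed (hT : TrinketRemovalSet T) {s : Set α} (hs : Tᶜ ⊆ s) : SupClosed s :=
  supClosed_of_forall_notMem_supIrred fun _ hx =>
    (hT.doublyIrreducible (not_not.mp fun h => hx (hs h))).supIrred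

theorem infClosed (hT : TrinketRemovalSet T) {s : Set α} (hs : Tᶜ ⊆ s) : InfClosed s :=
  infClosed_of_forall_notMem_infIrred fun _ hx =>
    (hT.doublyIrreducible (not_not.mp fun h => hx (hs h))).infIrred

theorem modularOn_univ (hT : TrinketRemovalSet T) (h : ModularOn Tᶜ) :
    ModularOn (Set.univ : Set α) := by
  rw [← Set.compl_union_self T]
  refine Set.Finite.induction_on_subset (motive := fun U _ => ModularOn (Tᶜ ∪ U)) T
    (Set.toFinite T) (by rwa [Set.union_empty]) fun {t} U htT _ _ ih => ?_
  obtain ⟨a, b, hsite, ht, hat, htb⟩ := hT.2 t htT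
  have hs : Tᶜ ⊆ insert t (Tᶜ ∪ U) := Set.subset_union_left.trans (Set.subset_insert _ _)
  rw [Set.union_insert]
  exact ih.insert (hT.supClosed hs) (hT.infClosed hs)
    (Or.inl fun ha => hsite.not_doublyIrreducible_left (hT.doublyIrreducible ha))
    (Or.inl fun hb => hsite.not_doublyIrreducible_right (hT.doublyIrreducible hb))
    hsite.covBy_iff ht hat htb

end TrinketRemovalSet

end Finite

end

theorem stmt_13_general {α : Type*} [Lattice α] [Finite α] (T : Set α)
    (hT : TrinketRemovalSet T) (S : Sublattice α) (hS : (S : Set α) = Tᶜ) :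
    ModularLaw α ↔ ModularLaw ↥S := by
  rw [← modularOn_univ_iff, ← S.modularOn_coe_iff, hS]
  exact ⟨fun h => h.mono (Set.subset_univ _), hT.modularOn_univ⟩

/-- A finite lattice is modular iff the lattice obtained by removing a
trinket-removal set is modular. -/
theorem stmt_13 {α : Type*} [Lattice α] [Finite α] [Nonempty α] (T : Set α)
    (hT : TrinketRemovalSet T) (S : Sublattice α) (hS : (S : Set α) = Tᶜ) :
    ModularLaw α ↔ ModularLaw ↥S :=
  stmt_13_general T hT S hS
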